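/- arXiv:math/9807166 — 4 statements merged into one kernel-verified Lean document; each statement's English description precedes it below -/
import Mathlib

section
/- Let p ≥ 3 be a prime, q = p^t, and work over a field of characteristic p. If y^q + y = x^{q+1}, then setting x' = x^p - x and y' = y - x²/2, one has (y')^q + y' = -(Σ_{i=0}^{t-1} (x')^{p^i})²/2. -/
lemma telescope_frob {K : Type*} [Field K] (p : ℕ) (hp : p.Prime) [CharP K p] (x : K) :
    ∀ t : ℕ, ∑ i ∈ Finset.range t, (x ^ p - x) ^ (p ^ i) = x ^ (p ^ t) - x := by
  haveI := Fact.mk hp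
  intro t
  induction t with
  | zero => simp
  | succ n ih =>
      rw [Finset.sum_range_succ, ih, sub_pow_char_pow, ← pow_mul, ← pow_succ']
      ring

/-- For an odd prime `p`, `q = p^t`, in characteristic `p`: if `y^q + y = x^{q+1}` then,
with `x' = x^p - x` and `y' = y - x²/2`, one has `(y')^q + y' = -(Σ_{i=0}^{t-1} (x')^{p^i})²/2`. -/
theorem stmt_11 {K : Type*} [Field K] (p t q : ℕ) (hp : p.Prime) (hp3 : 3 ≤ p) [CharP K p]
    (hq : q = p ^ t) (x y : K) (hxy : y ^ q + y = x ^ (q + 1)) :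
    (y - x ^ 2 / 2) ^ q + (y - x ^ 2 / 2)
      = -(∑ i ∈ Finset.range t, (x ^ p - x) ^ (p ^ i)) ^ 2 / 2 := by
  haveI := Fact.mk hp
  have h2 : (2 : K) ≠ 0 := by
    have hd : ¬ (p ∣ 2) := fun h => by have := Nat.le_of_dvd (by norm_num) h; omega
    intro h
    exact hd ((CharP.cast_eq_zero_iff K p 2).mp (by exact_mod_cast h))
  rw [telescope_frob p hp x t, ← hq]
  have hfr : (y - x ^ 2 / 2) ^ q = y ^ q - (x ^ 2 / 2) ^ q := by
    subst hq; exact sub_pow_char_pow _ _ _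
  have h2q : (2 : K) ^ q = 2 := by
    have : ((1:K) + 1) ^ q = 1 ^ q + 1 ^ q := by subst hq; exact add_pow_char_pow (1:K) 1 p t
    simpa [one_add_one_eq_two] using this
  have hxq : (x ^ 2 / 2) ^ q = (x ^ q) ^ 2 / 2 := by
    rw [div_pow, h2q, ← pow_mul, ← pow_mul, Nat.mul_comm]
  rw [hfr, hxq]
  have hx1 : x ^ (q + 1) = x ^ q * x := by rw [pow_succ]
  field_simp
  linear_combination (2 : K) * hxy - 2 * hx1
end

section
/- Let q be a prime power with q ≡ 2 (mod 3) and q ≥ 5. The set S = ∪_{j=1}^{q-2}[jq-(j-1), jq] ∪ {0} ∪ {n : n ≥ q²-2q+2} is a numerical semigroup, and the set H = {h/3 : h ∈ S, 3 | h} is a numerical semigroup whose number of gaps equals (q²-q-2)/6. -/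
/-!
Write `n = q * a + b` with `b < q`. Then `n ∈ S` iff `b = 0` or `q ≤ a + b`. So `S` is closed
under addition: a carry lowers the digit sum `a + b` by `q - 1`, but it occurs only when both
summands have `b ≠ 0` and hence digit sum at least `q`. The gaps of `S` are the `q * a + b`
with `1 ≤ b` and `a + b ≤ q - 1`. With `d = a + b` and `s = b`, the gaps of `H` correspond to
the pairs `1 ≤ s ≤ d ≤ q - 1` with `3 ∣ q * (d - s) + s`, i.e. `3 ∣ d + s` since `q ≡ 2 (mod 3)`.
There are `⌊(d + 1) / 3⌋` such `s` for each `d`, and these sum to `(q² - q - 2) / 6`.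
-/

/-- A numerical semigroup: a subset of `ℕ` containing `0`, closed under addition,
with finite complement. -/
def IsNumericalSemigroup (S : Set ℕ) : Prop :=
  0 ∈ S ∧ (∀ a ∈ S, ∀ b ∈ S, a + b ∈ S) ∧ Sᶜ.Finite

open Finset

theorem IsNumericalSemigroup.preimage_mul_left {S : Set ℕ} (hS : IsNumericalSemigroup S)
    {k : ℕ} (hk : 0 < k) : IsNumericalSemigroup {h | k * h ∈ S} := by
  obtain ⟨h0, hadd, hfin⟩ := hS
  refine ⟨by simpa using h0, fun a ha b hb => ?_,
    hfin.preimage (mul_right_injective₀ hk.ne').injOn⟩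
  simpa only [Set.mem_ofPred_eq, mul_add] using hadd _ ha _ hb

def hermitianSemigroup (q : ℕ) : Set ℕ :=
  {0} ∪ (⋃ j ∈ Finset.Icc 1 (q - 2), Set.Icc (j * q - (j - 1)) (j * q)) ∪
    {n | q ^ 2 - 2 * q + 2 ≤ n}

section Digits

variable {q a b j : ℕ}

theorem mul_add_mem_Icc_iff (hj : j ≤ q) (hb : b < q) :
    q * a + b ∈ Set.Icc (j * q - (j - 1)) (j * q) ↔ b = 0 ∧ a = j ∨ a + 1 = j ∧ q ≤ a + b := by
  rw [Set.mem_Icc]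
  obtain h | rfl | rfl | h : a + 1 < j ∨ a + 1 = j ∨ a = j ∨ j < a := by omega
  · obtain ⟨k, rfl⟩ := Nat.exists_eq_add_of_lt h
    have : (a + 1 + k + 1) * q = q * a + q * k + 2 * q := by ring
    omega
  · have : (a + 1) * q = q * a + q := by ring
    omega
  · rw [mul_comm]
    omega
  · obtain ⟨k, rfl⟩ := Nat.exists_eq_add_of_lt h
    have : q * (j + k + 1) = j * q + q * k + q := by ring
    omega

theorem sq_sub_two_mul_add_two_le_iff (hq : 2 ≤ q) (hb : b < q) :
    q ^ 2 - 2 * q + 2 ≤ q * a + b ↔ q ≤ a + 1 ∨ a + 2 = q ∧ 2 ≤ b := by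
  have hsq : 2 * q ≤ q ^ 2 := by nlinarith
  obtain h | rfl | h : a + 3 ≤ q ∨ a + 2 = q ∨ q ≤ a + 1 := by omega
  · obtain ⟨k, rfl⟩ := Nat.exists_eq_add_of_le h
    have : (a + 3 + k) ^ 2 = (a + 3 + k) * a + 3 * (a + 3 + k) + (a + 3 + k) * k := by ring
    omega
  · have : (a + 2) ^ 2 = (a + 2) * a + 2 * (a + 2) := by ring
    omega
  · have h1 : q * (q - 1) ≤ q * a := Nat.mul_le_mul_left q (by omega)
    have h2 : q * (q - 1) + q = q ^ 2 := by
      rw [sq, ← Nat.mul_add_one, Nat.sub_add_cancel (by omega)]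
    omega

theorem mul_add_mem_hermitianSemigroup_iff (hq : 2 ≤ q) (hb : b < q) :
    q * a + b ∈ hermitianSemigroup q ↔ b = 0 ∨ q ≤ a + b := by
  simp only [hermitianSemigroup, Set.mem_union, Set.mem_singleton_iff, Set.mem_iUnion,
    Finset.mem_Icc, exists_prop, Set.mem_ofPred_eq, sq_sub_two_mul_add_two_le_iff hq hb]
  constructor
  · rintro ((h0 | ⟨j, hj, hmem⟩) | htail)
    · omega
    · rw [mul_add_mem_Icc_iff (by omega) hb] at hmem
      omega
    · omega
  · intro h
    by_cases htail : q ≤ a + 1 ∨ a + 2 = q ∧ 2 ≤ b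
    · exact Or.inr htail
    by_cases hzero : a = 0 ∧ b = 0
    · obtain ⟨rfl, rfl⟩ := hzero
      exact Or.inl (Or.inl rfl)
    refine Or.inl (Or.inr ⟨if b = 0 then a else a + 1, ?_, (mul_add_mem_Icc_iff ?_ hb).2 ?_⟩) <;>
      split_ifs <;> omega

theorem mem_hermitianSemigroup_iff (hq : 2 ≤ q) (n : ℕ) :
    n ∈ hermitianSemigroup q ↔ n % q = 0 ∨ q ≤ n / q + n % q := by
  simpa only [Nat.div_add_mod] using
    mul_add_mem_hermitianSemigroup_iff hq (a := n / q) (Nat.mod_lt n (by omega))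

theorem add_mem_hermitianSemigroup (hq : 2 ≤ q) {x y : ℕ} (hx : x ∈ hermitianSemigroup q)
    (hy : y ∈ hermitianSemigroup q) : x + y ∈ hermitianSemigroup q := by
  have hq0 : 0 < q := by omega
  obtain ⟨a, b, hb, rfl⟩ : ∃ a b, b < q ∧ q * a + b = x :=
    ⟨x / q, x % q, Nat.mod_lt x hq0, Nat.div_add_mod x q⟩
  obtain ⟨c, d, hd, rfl⟩ : ∃ c d, d < q ∧ q * c + d = y :=
    ⟨y / q, y % q, Nat.mod_lt y hq0, Nat.div_add_mod y q⟩
  rw [mul_add_mem_hermitianSemigroup_iff hq hb] at hx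
  rw [mul_add_mem_hermitianSemigroup_iff hq hd] at hy
  obtain hbd | hbd := lt_or_ge (b + d) q
  · rw [show q * a + b + (q * c + d) = q * (a + c) + (b + d) by ring,
      mul_add_mem_hermitianSemigroup_iff hq hbd]
    omega
  · rw [show q * a + b + (q * c + d) = q * (a + c + 1) + (b + d - q) by
        rw [mul_add, mul_add, mul_one]; omega,
      mul_add_mem_hermitianSemigroup_iff hq (by omega)]
    omega

end Digits

theorem isNumericalSemigroup_hermitianSemigroup {q : ℕ} (hq : 2 ≤ q) :
    IsNumericalSemigroup (hermitianSemigroup q) :=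
  ⟨Or.inl (Or.inl rfl), fun _ hx _ hy => add_mem_hermitianSemigroup hq hx hy,
    (Set.finite_Iio (q ^ 2 - 2 * q + 2)).subset fun _ hn => not_le.1 fun h => hn (Or.inr h)⟩

theorem three_dvd_mul_add_iff {q a b : ℕ} (h3 : q % 3 = 2) : 3 ∣ q * a + b ↔ 3 ∣ a + b + b := by
  have := Nat.mul_mod q a 3
  rw [h3] at this
  omega

theorem card_filter_dvd_add (p d m : ℕ) : #{s ∈ Icc 1 m | p ∣ d + s} = (d + m) / p - d / p := by
  have hshift : #{s ∈ Icc 1 m | p ∣ d + s} = #{x ∈ Ioc d (d + m) | p ∣ x} := by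
    rw [← Icc_add_one_left_eq_Ioc, ← map_add_left_Icc, filter_map, card_map]
    rfl
  have hsplit : #{x ∈ Ioc 0 (d + m) | p ∣ x} =
      #{x ∈ Ioc 0 d | p ∣ x} + #{x ∈ Ioc d (d + m) | p ∣ x} := by
    rw [← Ioc_union_Ioc_eq_Ioc (Nat.zero_le d) (Nat.le_add_right d m), filter_union,
      card_union_of_disjoint (disjoint_filter_filter (Ioc_disjoint_Ioc_of_le le_rfl))]
  rw [Nat.Ioc_filter_dvd_card_eq_div, Nat.Ioc_filter_dvd_card_eq_div] at hsplit
  omega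

theorem card_filter_three_dvd_add_self (d : ℕ) : #{s ∈ Icc 1 d | 3 ∣ d + s} = (d + 1) / 3 := by
  rw [card_filter_dvd_add]
  obtain ⟨t, r, hr, rfl⟩ : ∃ t r, r < 3 ∧ d = 3 * t + r :=
    ⟨d / 3, d % 3, Nat.mod_lt d three_pos, (Nat.div_add_mod d 3).symm⟩
  interval_cases r <;> omega

theorem two_mul_sum_Icc_succ_div_three (m : ℕ) :
    2 * ∑ d ∈ Icc 1 (3 * m + 1), (d + 1) / 3 = 3 * m * (m + 1) := by
  induction m with
  | zero => rfl
  | succ m ih =>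
    rw [show 3 * (m + 1) + 1 = 3 * m + 1 + 1 + 1 + 1 by ring, sum_Icc_succ_top (by omega),
      sum_Icc_succ_top (by omega), sum_Icc_succ_top (by omega), mul_add, mul_add, mul_add, ih]
    ring_nf
    omega

theorem sum_Icc_succ_div_three {q : ℕ} (h3 : q % 3 = 2) :
    ∑ d ∈ Icc 1 (q - 1), (d + 1) / 3 = (q ^ 2 - q - 2) / 6 := by
  obtain ⟨m, rfl⟩ : ∃ m, q = 3 * m + 2 := ⟨q / 3, by omega⟩
  have hsum := two_mul_sum_Icc_succ_div_three m
  have hsq : (3 * m + 2) ^ 2 = 9 * (m * m) + 12 * m + 4 := by ring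
  have hm : 3 * m * (m + 1) = 3 * (m * m) + 3 * m := by ring
  rw [show 3 * m + 2 - 1 = 3 * m + 1 by omega]
  omega

theorem ncard_compl_setOf_three_mul_mem {q : ℕ} (h3 : q % 3 = 2) :
    {h | 3 * h ∈ hermitianSemigroup q}ᶜ.ncard =
      #((Icc 1 (q - 1)).sigma fun d => {s ∈ Icc 1 d | 3 ∣ d + s}) := by
  have hq0 : 0 < q := by omega
  have mem_iff := mem_hermitianSemigroup_iff (q := q) (by omega)
  rw [← Set.ncard_coe_finset]
  refine Set.ncard_congr (fun h _ => ⟨3 * h / q + 3 * h % q, 3 * h % q⟩) ?_ ?_ ?_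
  · intro h hh
    rw [Set.mem_compl_iff, Set.mem_ofPred_eq, mem_iff] at hh
    have hdvd := (three_dvd_mul_add_iff h3 (a := 3 * h / q) (b := 3 * h % q)).1
      (by rw [Nat.div_add_mod]; exact dvd_mul_right 3 h)
    simp only [coe_sigma, Set.mem_sigma_iff, mem_coe, mem_filter, mem_Icc]
    generalize 3 * h / q = a, 3 * h % q = b at hh hdvd ⊢
    omega
  · intro h₁ h₂ _ _ he
    simp only [Sigma.mk.injEq, heq_eq_eq] at he
    have hdiv : 3 * h₁ / q = 3 * h₂ / q := by omega
    have h₁_eq := Nat.div_add_mod (3 * h₁) q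
    rw [hdiv, he.2, Nat.div_add_mod] at h₁_eq
    omega
  · rintro ⟨d, s⟩ hds
    simp only [coe_sigma, Set.mem_sigma_iff, mem_coe, mem_filter, mem_Icc] at hds
    obtain ⟨h, hh⟩ : 3 ∣ q * (d - s) + s :=
      (three_dvd_mul_add_iff h3).2 (by rw [Nat.sub_add_cancel hds.2.1.2]; exact hds.2.2)
    have hdiv : (q * (d - s) + s) / q = d - s := by
      rw [Nat.mul_add_div hq0, Nat.div_eq_of_lt (by omega), add_zero]
    have hmod : (q * (d - s) + s) % q = s := by
      rw [Nat.mul_add_mod, Nat.mod_eq_of_lt (by omega)]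
    refine ⟨h, ?_, ?_⟩
    · rw [Set.mem_compl_iff, Set.mem_ofPred_eq, mem_iff, ← hh, hdiv, hmod]
      omega
    · rw [← hh, hdiv, hmod, Nat.sub_add_cancel hds.2.1.2]

theorem stmt_13_general (q : ℕ) (h3 : q % 3 = 2) :
    let S : Set ℕ :=
      {0} ∪ (⋃ j ∈ Finset.Icc 1 (q - 2), Set.Icc (j * q - (j - 1)) (j * q)) ∪
        {n | q ^ 2 - 2 * q + 2 ≤ n}
    let H : Set ℕ := {h | 3 * h ∈ S}
    IsNumericalSemigroup S ∧ IsNumericalSemigroup H ∧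
      Set.ncard Hᶜ = (q ^ 2 - q - 2) / 6 := by
  show IsNumericalSemigroup (hermitianSemigroup q) ∧
    IsNumericalSemigroup {h | 3 * h ∈ hermitianSemigroup q} ∧
      {h | 3 * h ∈ hermitianSemigroup q}ᶜ.ncard = (q ^ 2 - q - 2) / 6
  have hS := isNumericalSemigroup_hermitianSemigroup (q := q) (by omega)
  refine ⟨hS, hS.preimage_mul_left three_pos, ?_⟩
  rw [ncard_compl_setOf_three_mul_mem h3, card_sigma, ← sum_Icc_succ_div_three h3]
  exact sum_congr rfl fun d _ => card_filter_three_dvd_add_self d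

/-- For `q ≡ 2 (mod 3)`, `q ≥ 5`, the set
`S = ∪_{j=1}^{q-2}[jq-(j-1), jq] ∪ {0} ∪ {n : n ≥ q²-2q+2}` is a numerical semigroup,
and `H = {h : 3h ∈ S}` is a numerical semigroup with exactly `(q²-q-2)/6` gaps. -/
theorem stmt_13 (q : ℕ) (hq : IsPrimePow q) (h3 : q % 3 = 2) (h5 : 5 ≤ q) :
    let S : Set ℕ :=
      {0} ∪ (⋃ j ∈ Finset.Icc 1 (q - 2), Set.Icc (j * q - (j - 1)) (j * q)) ∪
        {n | q ^ 2 - 2 * q + 2 ≤ n}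
    let H : Set ℕ := {h | 3 * h ∈ S}
    IsNumericalSemigroup S ∧ IsNumericalSemigroup H ∧
      Set.ncard Hᶜ = (q ^ 2 - q - 2) / 6 :=
  stmt_13_general q h3
end

section
/- Let q ≡ 1 (mod 3) be a prime power. Then {h ∈ ℕ : 3h belongs to the numerical semigroup generated by q and q+1} equals the numerical semigroup generated by (2q+1)/3, q, and q+1. -/
/-- For `q ≡ 1 (mod 3)` a prime power, `{h : 3h ∈ ⟨q, q+1⟩}` equals the numerical
semigroup generated by `(2q+1)/3`, `q` and `q+1` (here `m = (2q+1)/3`). -/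
theorem stmt_14 (q m : ℕ) (hq : IsPrimePow q) (h3 : q % 3 = 1) (hm : 3 * m = 2 * q + 1) :
    {h : ℕ | ∃ a b : ℕ, 3 * h = a * q + b * (q + 1)}
      = {h : ℕ | ∃ a b c : ℕ, h = a * m + b * q + c * (q + 1)} := by
  ext h
  simp only [Set.mem_setOf_eq]
  constructor
  · rintro ⟨a, b, h3h⟩
    have hq3 : (q + 1) % 3 = 2 := by omega
    have hz : (3 * h) % 3 = 0 := by omega
    rw [h3h, Nat.add_mod, Nat.mul_mod, Nat.mul_mod b, h3, hq3] at hz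
    have hab : a % 3 = b % 3 := by omega
    obtain ⟨A, hA⟩ : ∃ A, a = 3 * A + a % 3 := ⟨a / 3, by omega⟩
    obtain ⟨B, hB⟩ : ∃ B, b = 3 * B + a % 3 := ⟨b / 3, by omega⟩
    refine ⟨a % 3, A, B, ?_⟩
    have key : 3 * (a % 3 * m + A * q + B * (q + 1)) = 3 * h := by
      rw [hA, hB] at h3h
      zify at h3h hm ⊢
      linear_combination (a % 3 : ℤ) * hm - h3h
    omega
  · rintro ⟨a, b, c, rfl⟩
    refine ⟨a + 3 * b, a + 3 * c, ?_⟩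
    zify at hm ⊢
    linear_combination (a : ℤ) * hm
end

section
/- The numerical semigroup H = ⟨(2q+1)/3, q, q+1⟩ for q ≡ 1 (mod 3) has exactly (q²-q)/6 gaps. -/
namespace Stmt15

/-! Throughout, `q = 3k+1` and the multiplicity is `mm = 2k+1`.
The semigroup is generated by `2k+1`, `3k+1`, `3k+2`. -/

/-- gap parametrization function -/
private def F (k : ℕ) (p : ℕ × ℕ) : ℕ :=
  if p.2 ≤ p.1 + p.1 / 2 then p.1 * (3*k+1+1) - p.2 * (2*k+1)
  else p.1 * (3*k+1) - (p.2 - (p.1 + p.1 / 2)) * (2*k+1)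

/-- index set -/
private def J (k : ℕ) : Finset (ℕ × ℕ) :=
  (Finset.Icc 1 k).biUnion fun d => {d} ×ˢ Finset.Icc 1 (3*d - 1)

private lemma mem_J (k : ℕ) (p : ℕ × ℕ) :
    p ∈ J k ↔ 1 ≤ p.1 ∧ p.1 ≤ k ∧ 1 ≤ p.2 ∧ p.2 ≤ 3*p.1 - 1 := by
  unfold J
  simp only [Finset.mem_biUnion, Finset.mem_Icc, Finset.mem_product, Finset.mem_singleton]
  constructor
  · rintro ⟨d, ⟨hd1, hd2⟩, rfl, h3, h4⟩
    exact ⟨hd1, hd2, h3, h4⟩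
  · rintro ⟨h1, h2, h3, h4⟩
    exact ⟨p.1, ⟨h1, h2⟩, rfl, h3, h4⟩

private lemma card_J (k : ℕ) : (J k).card = ∑ d ∈ Finset.Icc 1 k, (3*d - 1) := by
  unfold J
  rw [Finset.card_biUnion]
  · refine Finset.sum_congr rfl fun d _ => ?_
    rw [Finset.card_product, Finset.card_singleton, Nat.card_Icc]
    omega
  · intro x hx y hy hxy
    simp only [Finset.disjoint_left, Finset.mem_product, Finset.mem_singleton]
    rintro p ⟨hp1, -⟩ ⟨hp2, -⟩
    exact hxy (hp1 ▸ hp2 ▸ rfl)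

/-! ### floor facts -/

private lemma f1l (k d t : ℕ) (hdk : d ≤ k) (ht : t ≤ d + d / 2) :
    t * (2*k+1) ≤ d * (3*k+1+1) := by
  obtain ⟨j, hj⟩ : ∃ j, d = 2*j ∨ d = 2*j+1 := ⟨d/2, by omega⟩
  rcases hj with rfl | rfl
  · have ht' : t ≤ 3*j := by omega
    have hx : t * (2*k+1) ≤ (3*j) * (2*k+1) := Nat.mul_le_mul ht' le_rfl
    nlinarith
  · have ht' : t ≤ 3*j + 1 := by omega
    have hx : t * (2*k+1) ≤ (3*j+1) * (2*k+1) := Nat.mul_le_mul ht' le_rfl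
    nlinarith

private lemma f1g (k d t : ℕ) (hdk : d ≤ k) (h : t * (2*k+1) ≤ d * (3*k+1+1)) :
    t ≤ d + d / 2 := by
  by_contra hbr
  push_neg at hbr
  have hx : (d + d/2 + 1) * (2*k+1) ≤ t * (2*k+1) := Nat.mul_le_mul (by omega) le_rfl
  obtain ⟨j, hj⟩ : ∃ j, d = 2*j ∨ d = 2*j+1 := ⟨d/2, by omega⟩
  rcases hj with rfl | rfl
  · have h2 : (2*j) + (2*j)/2 + 1 = 3*j + 1 := by omega
    rw [h2] at hx
    nlinarith
  · have h2 : (2*j+1) + (2*j+1)/2 + 1 = 3*j + 2 := by omega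
    rw [h2] at hx
    have hjk : 2*j+1 ≤ k := hdk
    nlinarith

private lemma f2l (k d s : ℕ) (hd1 : 1 ≤ d) (hdk : d ≤ k) (hs : s + (d + d / 2) ≤ 3*d - 1) :
    s * (2*k+1) ≤ d * (3*k+1) := by
  obtain ⟨j, hj⟩ : ∃ j, d = 2*j ∨ d = 2*j+1 := ⟨d/2, by omega⟩
  rcases hj with rfl | rfl
  · have hj1 : 1 ≤ j := by omega
    have hs' : s + 1 ≤ 3*j := by omega
    have hx : (s+1) * (2*k+1) ≤ (3*j) * (2*k+1) := Nat.mul_le_mul hs' le_rfl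
    nlinarith
  · have hs' : s + 1 ≤ 3*j + 2 := by omega
    have hx : (s+1) * (2*k+1) ≤ (3*j+2) * (2*k+1) := Nat.mul_le_mul hs' le_rfl
    have hjk : 2*j+1 ≤ k := hdk
    nlinarith

private lemma f2g (k d t : ℕ) (hd1 : 1 ≤ d) (hdk : d ≤ k) (h : t * (2*k+1) ≤ d * (3*k+1)) :
    t + (d + d / 2) ≤ 3*d - 1 := by
  by_contra hbr
  push_neg at hbr
  obtain ⟨j, hj⟩ : ∃ j, d = 2*j ∨ d = 2*j+1 := ⟨d/2, by omega⟩
  rcases hj with rfl | rfl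
  · have hj1 : 1 ≤ j := by omega
    have ht' : 3*j ≤ t := by omega
    have hx : (3*j) * (2*k+1) ≤ t * (2*k+1) := Nat.mul_le_mul ht' le_rfl
    nlinarith
  · have ht' : 3*j + 2 ≤ t := by omega
    have hx : (3*j+2) * (2*k+1) ≤ t * (2*k+1) := Nat.mul_le_mul ht' le_rfl
    have hjk : 2*j+1 ≤ k := hdk
    nlinarith

/-! ### minimality: gap candidates are not in the semigroup -/

private lemma min_plus (k a b c d t : ℕ) (hdk : d ≤ k) (ht : 1 ≤ t)
    (h : a*(2*k+1) + b*(3*k+1) + c*(3*k+1+1) + t*(2*k+1) = d*(3*k+1+1)) : False := by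
  rcases le_or_gt d c with hdc | hdc
  · have h1 : d*(3*k+1+1) ≤ c*(3*k+1+1) := Nat.mul_le_mul hdc le_rfl
    have h2 : 1*(2*k+1) ≤ t*(2*k+1) := Nat.mul_le_mul ht le_rfl
    zify at h h1 h2
    nlinarith [h, h1, h2, Int.ofNat_nonneg (a*(2*k+1)), Int.ofNat_nonneg (b*(3*k+1)), Int.ofNat_nonneg k]
  · have hZ := congrArg (fun x : ℕ => (x : ℤ)) h
    push_cast at hZ
    have hdvd : (2*(k:ℤ)+1) ∣ ((d:ℤ) - c + b) :=
      ⟨2*(a:ℤ) + 3*b + 2*t - 3*((d:ℤ)-c), by linear_combination (-2 : ℤ)*hZ⟩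
    have hcd : (c:ℤ) < d := by exact_mod_cast hdc
    have hpos : (0:ℤ) < (d:ℤ) - c + b := by
      have hb : (0:ℤ) ≤ b := by positivity
      linarith
    have hbk : 2*(k:ℤ)+1 ≤ (d:ℤ) - c + b := Int.le_of_dvd hpos hdvd
    have hdk' : (d:ℤ) ≤ k := by exact_mod_cast hdk
    have ht' : (1:ℤ) ≤ t := by exact_mod_cast ht
    have hc0 : (0:ℤ) ≤ c := by positivity
    have ha0 : (0:ℤ) ≤ (a:ℤ)*(2*(k:ℤ)+1) := by positivity
    have e1 : ((2*(k:ℤ)+1)) * (3*(k:ℤ)+1) ≤ ((d:ℤ) - c + b) * (3*(k:ℤ)+1) :=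
      mul_le_mul_of_nonneg_right hbk (by positivity)
    have e2 : (1:ℤ) * (2*(k:ℤ)+1) ≤ (t:ℤ) * (2*(k:ℤ)+1) :=
      mul_le_mul_of_nonneg_right ht' (by positivity)
    have e3 : (d:ℤ) * (6*(k:ℤ)+3) ≤ (k:ℤ) * (6*(k:ℤ)+3) :=
      mul_le_mul_of_nonneg_right hdk' (by positivity)
    nlinarith [hZ, e1, e2, e3, ha0, hc0]

private lemma min_q (k a b c d t : ℕ) (hdk : d ≤ k) (ht : 1 ≤ t)
    (h : a*(2*k+1) + b*(3*k+1) + c*(3*k+1+1) + t*(2*k+1) = d*(3*k+1)) : False := by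
  rcases le_or_gt d b with hdb | hdb
  · have h1 : d*(3*k+1) ≤ b*(3*k+1) := Nat.mul_le_mul hdb le_rfl
    have h2 : 1*(2*k+1) ≤ t*(2*k+1) := Nat.mul_le_mul ht le_rfl
    zify at h h1 h2
    nlinarith [h, h1, h2, Int.ofNat_nonneg (a*(2*k+1)), Int.ofNat_nonneg (c*(3*k+1+1)), Int.ofNat_nonneg k]
  · have hZ := congrArg (fun x : ℕ => (x : ℤ)) h
    push_cast at hZ
    have hdvd : (2*(k:ℤ)+1) ∣ ((d:ℤ) - b + c) :=
      ⟨3*((d:ℤ)-b) - 2*(a:ℤ) - 3*c - 2*t, by linear_combination (2 : ℤ)*hZ⟩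
    have hbd : (b:ℤ) < d := by exact_mod_cast hdb
    have hpos : (0:ℤ) < (d:ℤ) - b + c := by
      have hc : (0:ℤ) ≤ c := by positivity
      linarith
    have hck : 2*(k:ℤ)+1 ≤ (d:ℤ) - b + c := Int.le_of_dvd hpos hdvd
    have hdk' : (d:ℤ) ≤ k := by exact_mod_cast hdk
    have ht' : (1:ℤ) ≤ t := by exact_mod_cast ht
    have hb0 : (0:ℤ) ≤ b := by positivity
    have ha0 : (0:ℤ) ≤ (a:ℤ)*(2*(k:ℤ)+1) := by positivity
    have e1 : ((2*(k:ℤ)+1)) * (3*(k:ℤ)+2) ≤ ((d:ℤ) - b + c) * (3*(k:ℤ)+2) :=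
      mul_le_mul_of_nonneg_right hck (by positivity)
    have e2 : (1:ℤ) * (2*(k:ℤ)+1) ≤ (t:ℤ) * (2*(k:ℤ)+1) :=
      mul_le_mul_of_nonneg_right ht' (by positivity)
    have e3 : (d:ℤ) * (6*(k:ℤ)+3) ≤ (k:ℤ) * (6*(k:ℤ)+3) :=
      mul_le_mul_of_nonneg_right hdk' (by positivity)
    nlinarith [hZ, e1, e2, e3, ha0, hb0]

/-! ### every number is in the semigroup or has gap form -/

private lemma mem_or_gap (k n : ℕ) :
    (∃ a b c : ℕ, n = a * (2*k+1) + b * (3*k+1) + c * (3*k+1+1)) ∨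
    (∃ d t : ℕ, 1 ≤ d ∧ d ≤ k ∧ 1 ≤ t ∧
      (n + t * (2*k+1) = d * (3*k+1+1) ∨ n + t * (2*k+1) = d * (3*k+1))) := by
  obtain ⟨i, r, hn, hrlt⟩ : ∃ i r, n = (2*k+1)*i + r ∧ r < 2*k+1 :=
    ⟨n/(2*k+1), n % (2*k+1), (Nat.div_add_mod n (2*k+1)).symm, Nat.mod_lt _ (by omega)⟩
  obtain ⟨j, d0, h2r, hd0m⟩ : ∃ j d0, 2*r = (2*k+1)*j + d0 ∧ d0 < 2*k+1 :=
    ⟨(2*r)/(2*k+1), (2*r) % (2*k+1), (Nat.div_add_mod (2*r) (2*k+1)).symm, Nat.mod_lt _ (by omega)⟩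
  have h1 : (n:ℤ) = (2*(k:ℤ)+1)*i + r := by exact_mod_cast hn
  have h2 : 2*(r:ℤ) = (2*(k:ℤ)+1)*j + d0 := by exact_mod_cast h2r
  rcases le_or_gt d0 k with hcase | hcase
  · -- the Apéry element of n's class is d0*(3k+2)
    have hdvd : (2*(k:ℤ)+1) ∣ (d0:ℤ)*(3*(k:ℤ)+2) - n :=
      ⟨3*(n:ℤ) - (2*(i:ℤ)+j)*(3*(k:ℤ)+2), by
        linear_combination (-(3*(k:ℤ)+2)) * h2 + (-(6*(k:ℤ)+4)) * h1⟩
    rcases le_or_gt (d0*(3*k+1+1)) n with hwn | hwn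
    · left
      have h' : (2*(k:ℤ)+1) ∣ (n:ℤ) - d0*(3*(k:ℤ)+2) := by
        have := dvd_neg.mpr hdvd
        rwa [neg_sub] at this
      have hcast : ((n - d0*(3*k+1+1) : ℕ) : ℤ) = (n:ℤ) - d0*(3*(k:ℤ)+2) := by
        rw [Nat.cast_sub hwn]; push_cast; ring
      have hdN : ((2*k+1 : ℕ):ℤ) ∣ ((n - d0*(3*k+1+1) : ℕ) : ℤ) := by
        rw [hcast]; exact_mod_cast h'
      have hdN' : (2*k+1) ∣ n - d0*(3*k+1+1) := Int.natCast_dvd_natCast.mp hdN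
      obtain ⟨u, hu⟩ := hdN'
      refine ⟨u, 0, d0, ?_⟩
      have hrec : n = (2*k+1)*u + d0*(3*k+1+1) := by
        have := (Nat.sub_eq_iff_eq_add hwn).mp hu
        linarith
      rw [hrec]; ring
    · right
      have hd01 : 1 ≤ d0 := by
        rcases Nat.eq_zero_or_pos d0 with h0 | h0
        · subst h0; simp at hwn
        · exact h0
      have hcast : ((d0*(3*k+1+1) - n : ℕ) : ℤ) = (d0:ℤ)*(3*(k:ℤ)+2) - n := by
        rw [Nat.cast_sub (le_of_lt hwn)]; push_cast; ring
      have hdN : (2*k+1) ∣ d0*(3*k+1+1) - n := by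
        apply Int.natCast_dvd_natCast.mp
        rw [hcast]; exact_mod_cast hdvd
      obtain ⟨u, hu⟩ := hdN
      have hu1 : 1 ≤ u := by
        rcases Nat.eq_zero_or_pos u with h0 | h0
        · exfalso
          subst h0
          simp only [Nat.mul_zero] at hu
          have := Nat.sub_eq_zero_iff_le.mp hu
          omega
        · exact h0
      refine ⟨d0, u, hd01, hcase, hu1, Or.inl ?_⟩
      have := (Nat.sub_eq_iff_eq_add (le_of_lt hwn)).mp hu
      linarith
  · -- the Apéry element of n's class is (2k+1-d0)*(3k+1)
    set d := 2*k+1 - d0 with hd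
    have hd1 : 1 ≤ d := by omega
    have hdk : d ≤ k := by omega
    have hdZ : (d:ℤ) = 2*(k:ℤ)+1 - d0 := by omega
    have hdvd : (2*(k:ℤ)+1) ∣ (d:ℤ)*(3*(k:ℤ)+1) - n :=
      ⟨(3*(k:ℤ)+1) + (2*(i:ℤ)+j)*(3*(k:ℤ)+1) - 3*(n:ℤ), by
        rw [hdZ]
        linear_combination (6*(k:ℤ)+2) * h1 + (3*(k:ℤ)+1) * h2⟩
    rcases le_or_gt (d*(3*k+1)) n with hwn | hwn
    · left
      have h' : (2*(k:ℤ)+1) ∣ (n:ℤ) - d*(3*(k:ℤ)+1) := by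
        have := dvd_neg.mpr hdvd
        rwa [neg_sub] at this
      have hcast : ((n - d*(3*k+1) : ℕ) : ℤ) = (n:ℤ) - d*(3*(k:ℤ)+1) := by
        rw [Nat.cast_sub hwn]; push_cast; ring
      have hdN : (2*k+1) ∣ n - d*(3*k+1) := by
        apply Int.natCast_dvd_natCast.mp
        rw [hcast]; exact_mod_cast h'
      obtain ⟨u, hu⟩ := hdN
      refine ⟨u, d, 0, ?_⟩
      have hrec : n = (2*k+1)*u + d*(3*k+1) := by
        have := (Nat.sub_eq_iff_eq_add hwn).mp hu
        linarith
      rw [hrec]; ring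
    · right
      have hdN : (2*k+1) ∣ d*(3*k+1) - n := by
        apply Int.natCast_dvd_natCast.mp
        have hcast : ((d*(3*k+1) - n : ℕ) : ℤ) = (d:ℤ)*(3*(k:ℤ)+1) - n := by
          rw [Nat.cast_sub (le_of_lt hwn)]; push_cast; ring
        rw [hcast]; exact_mod_cast hdvd
      obtain ⟨u, hu⟩ := hdN
      have hu1 : 1 ≤ u := by
        rcases Nat.eq_zero_or_pos u with h0 | h0
        · exfalso
          subst h0
          simp only [Nat.mul_zero] at hu
          have := Nat.sub_eq_zero_iff_le.mp hu
          omega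
        · exact h0
      refine ⟨d, u, hd1, hdk, hu1, Or.inr ?_⟩
      have := (Nat.sub_eq_iff_eq_add (le_of_lt hwn)).mp hu
      linarith

/-! ### uniqueness of gap parametrization -/

private lemma u_plus_aux (k d₁ t₁ d₂ t₂ n : ℕ) (hdk₂ : d₂ ≤ k) (hle : d₁ ≤ d₂)
    (h₁ : n + t₁*(2*k+1) = d₁*(3*k+1+1)) (h₂ : n + t₂*(2*k+1) = d₂*(3*k+1+1)) :
    d₁ = d₂ ∧ t₁ = t₂ := by
  have hmul : d₁*(3*k+1+1) ≤ d₂*(3*k+1+1) := Nat.mul_le_mul hle le_rfl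
  have htle : t₁ ≤ t₂ := by
    have h3 : t₁*(2*k+1) ≤ t₂*(2*k+1) := by linarith
    exact Nat.le_of_mul_le_mul_right h3 (by omega)
  obtain ⟨e, rfl⟩ : ∃ e, d₂ = d₁ + e := ⟨d₂ - d₁, by omega⟩
  obtain ⟨s, rfl⟩ : ∃ s, t₂ = t₁ + s := ⟨t₂ - t₁, by omega⟩
  have hes : e*(3*k+1+1) = s*(2*k+1) := by
    have e1 : (d₁+e)*(3*k+1+1) = d₁*(3*k+1+1) + e*(3*k+1+1) := by ring
    have e2 : (t₁+s)*(2*k+1) = t₁*(2*k+1) + s*(2*k+1) := by ring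
    linarith
  have hdvd : (2*k+1) ∣ e := by
    have e3 : e + 3*(e*(2*k+1)) = 2*(s*(2*k+1)) := by
      have e4 : e + 3*(e*(2*k+1)) = 2*(e*(3*k+1+1)) := by ring
      rw [e4, hes]
    rw [Nat.eq_sub_of_add_eq e3]
    exact Nat.dvd_sub ⟨2*s, by ring⟩ ⟨3*e, by ring⟩
  have he0 : e = 0 := by
    rcases Nat.eq_zero_or_pos e with h | h
    · exact h
    · have := Nat.le_of_dvd h hdvd
      omega
  subst he0
  have hs0 : s * (2*k+1) = 0 := by
    have : (0:ℕ)*(3*k+1+1) = 0 := by ring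
    omega
  have : s = 0 := by
    rcases Nat.mul_eq_zero.mp hs0 with h | h
    · exact h
    · omega
  omega

private lemma u_q_aux (k d₁ t₁ d₂ t₂ n : ℕ) (hdk₂ : d₂ ≤ k) (hle : d₁ ≤ d₂)
    (h₁ : n + t₁*(2*k+1) = d₁*(3*k+1)) (h₂ : n + t₂*(2*k+1) = d₂*(3*k+1)) :
    d₁ = d₂ ∧ t₁ = t₂ := by
  have hmul : d₁*(3*k+1) ≤ d₂*(3*k+1) := Nat.mul_le_mul hle le_rfl
  have htle : t₁ ≤ t₂ := by
    have h3 : t₁*(2*k+1) ≤ t₂*(2*k+1) := by linarith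
    exact Nat.le_of_mul_le_mul_right h3 (by omega)
  obtain ⟨e, rfl⟩ : ∃ e, d₂ = d₁ + e := ⟨d₂ - d₁, by omega⟩
  obtain ⟨s, rfl⟩ : ∃ s, t₂ = t₁ + s := ⟨t₂ - t₁, by omega⟩
  have hes : e*(3*k+1) = s*(2*k+1) := by
    have e1 : (d₁+e)*(3*k+1) = d₁*(3*k+1) + e*(3*k+1) := by ring
    have e2 : (t₁+s)*(2*k+1) = t₁*(2*k+1) + s*(2*k+1) := by ring
    linarith
  have hdvd : (2*k+1) ∣ e := by
    have e3 : e + 2*(s*(2*k+1)) = 3*(e*(2*k+1)) := by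
      have e4 : 3*(e*(2*k+1)) = 2*(e*(3*k+1)) + e := by ring
      rw [e4, hes]; ring
    rw [Nat.eq_sub_of_add_eq e3]
    exact Nat.dvd_sub ⟨3*e, by ring⟩ ⟨2*s, by ring⟩
  have he0 : e = 0 := by
    rcases Nat.eq_zero_or_pos e with h | h
    · exact h
    · have := Nat.le_of_dvd h hdvd
      omega
  subst he0
  have hs0 : s * (2*k+1) = 0 := by
    have : (0:ℕ)*(3*k+1) = 0 := by ring
    omega
  have : s = 0 := by
    rcases Nat.mul_eq_zero.mp hs0 with h | h
    · exact h
    · omega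
  omega

private lemma u_mixed (k d₁ t₁ d₂ t₂ n : ℕ) (hd₁1 : 1 ≤ d₁) (hd₁k : d₁ ≤ k)
    (hd₂1 : 1 ≤ d₂) (hd₂k : d₂ ≤ k)
    (h₁ : n + t₁*(2*k+1) = d₁*(3*k+1+1)) (h₂ : n + t₂*(2*k+1) = d₂*(3*k+1)) : False := by
  have e1 : 2*(d₁*(3*k+1+1)) = 3*(d₁*(2*k+1)) + d₁ := by ring
  have e2 : 2*(d₂*(3*k+1)) + d₂ = 3*(d₂*(2*k+1)) := by ring
  have E2 : (d₁ + d₂) + (3*(d₁*(2*k+1)) + 2*(t₂*(2*k+1)))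
      = 3*(d₂*(2*k+1)) + 2*(t₁*(2*k+1)) := by linarith
  have hdvd : (2*k+1) ∣ d₁ + d₂ := by
    rw [Nat.eq_sub_of_add_eq E2]
    exact Nat.dvd_sub ⟨3*d₂ + 2*t₁, by ring⟩ ⟨3*d₁ + 2*t₂, by ring⟩
  have := Nat.le_of_dvd (by omega) hdvd
  omega

end Stmt15

open Stmt15

/-- For `q ≡ 1 (mod 3)` a prime power, the numerical semigroup generated by
`(2q+1)/3`, `q` and `q+1` has exactly `(q²-q)/6` gaps (here `m = (2q+1)/3`). -/
theorem stmt_15 (q m : ℕ) (hq : IsPrimePow q) (h3 : q % 3 = 1) (hm : 3 * m = 2 * q + 1) :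
    Set.ncard {n : ℕ | ¬ ∃ a b c : ℕ, n = a * m + b * q + c * (q + 1)}
      = (q ^ 2 - q) / 6 := by
  clear hq
  obtain ⟨k, rfl⟩ : ∃ k, q = 3*k+1 := ⟨q/3, by omega⟩
  have hm' : m = 2*k+1 := by omega
  subst hm'
  clear h3 hm
  -- canonical equations for the parametrization
  have hspec : ∀ d t : ℕ, 1 ≤ d → d ≤ k → 1 ≤ t → t ≤ 3*d - 1 →
      (t ≤ d + d/2 ∧ F k (d, t) + t*(2*k+1) = d*(3*k+1+1)) ∨
      (d + d/2 < t ∧ 1 ≤ t - (d + d/2) ∧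
        F k (d, t) + (t - (d + d/2))*(2*k+1) = d*(3*k+1)) := by
    intro d t hd1 hdk ht1 htu
    by_cases hbr : t ≤ d + d/2
    · left
      refine ⟨hbr, ?_⟩
      have h1 : t*(2*k+1) ≤ d*(3*k+1+1) := f1l k d t hdk hbr
      simp only [F, if_pos hbr]
      exact Nat.sub_add_cancel h1
    · right
      push_neg at hbr
      have h1 : (t - (d + d/2))*(2*k+1) ≤ d*(3*k+1) :=
        f2l k d (t - (d + d/2)) hd1 hdk (by omega)
      refine ⟨hbr, by omega, ?_⟩
      simp only [F, if_neg (by omega : ¬ t ≤ d + d/2)]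
      exact Nat.sub_add_cancel h1
  -- the gap set
  have hmain : {n : ℕ | ¬ ∃ a b c : ℕ, n = a * (2*k+1) + b * (3*k+1) + c * (3*k+1 + 1)}
      = ↑((J k).image (F k)) := by
    ext n
    simp only [Set.mem_setOf_eq, Finset.coe_image, Set.mem_image, Finset.mem_coe]
    constructor
    · intro hn
      rcases mem_or_gap k n with h | ⟨d, t, hd1, hdk, ht1, hcase⟩
      · exact absurd h hn
      rcases hcase with hpt | hqt
      · -- plus side
        have htm : t*(2*k+1) ≤ d*(3*k+1+1) := by
          rw [← hpt]; exact Nat.le_add_left _ _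
        have htle : t ≤ d + d/2 := f1g k d t hdk htm
        refine ⟨(d, t), ?_, ?_⟩
        · rw [mem_J]; exact ⟨hd1, hdk, ht1, by omega⟩
        · simp only [F, if_pos htle]
          exact Nat.sub_eq_of_eq_add hpt.symm
      · -- q side
        have htm : t*(2*k+1) ≤ d*(3*k+1) := by
          rw [← hqt]; exact Nat.le_add_left _ _
        have htle : t + (d + d/2) ≤ 3*d - 1 := f2g k d t hd1 hdk htm
        refine ⟨(d, t + (d + d/2)), ?_, ?_⟩
        · rw [mem_J]; exact ⟨hd1, hdk, by omega, by omega⟩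
        · simp only [F, if_neg (by omega : ¬ t + (d + d/2) ≤ d + d/2)]
          rw [Nat.add_sub_cancel]
          exact Nat.sub_eq_of_eq_add hqt.symm
    · rintro ⟨⟨d, t⟩, hpJ, rfl⟩
      rw [mem_J] at hpJ
      obtain ⟨hd1, hdk, ht1, htu⟩ := hpJ
      rintro ⟨a, b, c, habc⟩
      rcases hspec d t hd1 hdk ht1 htu with ⟨hb, he⟩ | ⟨hb, hs1, he⟩
      · rw [habc] at he
        exact min_plus k a b c d t hdk ht1 (by linarith)
      · rw [habc] at he
        exact min_q k a b c d (t - (d + d/2)) hdk hs1 (by linarith)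
  rw [hmain, Set.ncard_coe_finset]
  -- injectivity
  have hinj : Set.InjOn (F k) ↑(J k) := by
    rintro ⟨d₁, t₁⟩ h₁ ⟨d₂, t₂⟩ h₂ heq
    rw [Finset.mem_coe, mem_J] at h₁ h₂
    obtain ⟨hd₁1, hd₁k, ht₁1, ht₁u⟩ := h₁
    obtain ⟨hd₂1, hd₂k, ht₂1, ht₂u⟩ := h₂
    rcases hspec d₁ t₁ hd₁1 hd₁k ht₁1 ht₁u with ⟨hb₁, he₁⟩ | ⟨hb₁, hs₁, he₁⟩ <;>
      rcases hspec d₂ t₂ hd₂1 hd₂k ht₂1 ht₂u with ⟨hb₂, he₂⟩ | ⟨hb₂, hs₂, he₂⟩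
    · rw [heq] at he₁
      rcases le_total d₁ d₂ with hle | hle
      · obtain ⟨hd, ht⟩ := u_plus_aux k d₁ t₁ d₂ t₂ _ hd₂k hle he₁ he₂
        simp [hd, ht]
      · obtain ⟨hd, ht⟩ := u_plus_aux k d₂ t₂ d₁ t₁ _ hd₁k hle he₂ he₁
        simp [hd.symm, ht.symm]
    · rw [heq] at he₁
      exact absurd (u_mixed k d₁ t₁ d₂ (t₂ - (d₂ + d₂/2)) _ hd₁1 hd₁k hd₂1 hd₂k he₁ he₂)
        (by simp)
    · rw [heq] at he₁
      exact absurd (u_mixed k d₂ t₂ d₁ (t₁ - (d₁ + d₁/2)) _ hd₂1 hd₂k hd₁1 hd₁k he₂ he₁)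
        (by simp)
    · rw [heq] at he₁
      rcases le_total d₁ d₂ with hle | hle
      · obtain ⟨hd, ht⟩ := u_q_aux k d₁ (t₁ - (d₁ + d₁/2)) d₂ (t₂ - (d₂ + d₂/2)) _
          hd₂k hle he₁ he₂
        have : t₁ = t₂ := by omega
        simp [hd, this]
      · obtain ⟨hd, ht⟩ := u_q_aux k d₂ (t₂ - (d₂ + d₂/2)) d₁ (t₁ - (d₁ + d₁/2)) _
          hd₁k hle he₂ he₁
        have : t₁ = t₂ := by omega
        simp [hd.symm, this]
  rw [Finset.card_image_of_injOn hinj, card_J]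
  -- final sum arithmetic
  have hsum : ∀ K : ℕ, 2 * (∑ d ∈ Finset.Icc 1 K, (3*d - 1)) = 3*(K*K) + K := by
    intro K
    induction K with
    | zero => simp
    | succ n ih =>
      rw [Finset.sum_Icc_succ_top (by omega : 1 ≤ n+1)]
      have h1 : 3*(n+1) - 1 = 3*n + 2 := by omega
      have h2 : (n+1)*(n+1) = n*n + 2*n + 1 := by ring
      rw [h1, h2]
      linarith
  have hp : (3*k+1)^2 = 9*(k*k) + 6*k + 1 := by ring
  rw [hp]
  have h2s := hsum k
  generalize (∑ d ∈ Finset.Icc 1 k, (3*d - 1)) = S at h2s ⊢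
  generalize k*k = X at h2s ⊢
  omega
end
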